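/- The weighted MOCU η(λ) is not in general a convex combination of the endpoint MOCUs: there exist Θ = {θ₁, θ₂} with uniform prior, Ψ, and costs ξ¹, ξ² such that η(1/2) > (1/2)η(1) + (1/2)η(0). Concretely, one may exhibit a finite example where η(0) = η(1) = 0 but η(1/2) > 0. -/
import Mathlib


open MeasureTheory

lemma ciInf_fin2 (f : Fin 2 → ℝ) : (⨅ i, f i) = min (f 0) (f 1) := by
  apply le_antisymm
  · exact le_min (ciInf_le (Finite.bddBelow_range f) 0)
      (ciInf_le (Finite.bddBelow_range f) 1)
  · apply le_ciInf
    intro i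
    fin_cases i
    · exact min_le_left _ _
    · exact min_le_right _ _

/-- The weighted MOCU η(λ) is not in general a convex combination of the
endpoint MOCUs: there exist two models (uniform prior), a finite operator
class Ψ, and costs ξ¹, ξ² such that η(0) = η(1) = 0 yet η(1/2) > 0, so in
particular η(1/2) > (1/2)η(1) + (1/2)η(0). -/
theorem weighted_mocu_not_convex_combination :
    ∃ (Ψ : Type) (_ : Fintype Ψ) (_ : Nonempty Ψ) (ξ1 ξ2 : Fin 2 → Ψ → ℝ),
      ∀ η : ℝ → ℝ,
        (η = fun l =>
          (⨅ ψ : Ψ, ((l * ξ1 0 ψ + (1 - l) * ξ2 0 ψ) +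
              (l * ξ1 1 ψ + (1 - l) * ξ2 1 ψ)) / 2) -
          ((⨅ ψ : Ψ, (l * ξ1 0 ψ + (1 - l) * ξ2 0 ψ)) +
              (⨅ ψ : Ψ, (l * ξ1 1 ψ + (1 - l) * ξ2 1 ψ))) / 2) →
        η 0 = 0 ∧ η 1 = 0 ∧ 0 < η (1/2) ∧
          (1/2) * η 1 + (1/2) * η 0 < η (1/2) := by
  refine ⟨Fin 2, inferInstance, inferInstance,
    ![![0, 3], ![0, 1]], ![![1, 0], ![3, 0]], ?_⟩
  intro η hη
  subst hη
  simp only [ciInf_fin2]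
  norm_num [Matrix.cons_val_zero, Matrix.cons_val_one, Matrix.head_cons]
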